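/- arXiv:math/0703009 — 4 statements merged into one kernel-verified Lean document; each statement's English description precedes it below -/
import Mathlib

section
/- Let V and W be real vector spaces and let w : V × V → W be a bilinear map. Fix A, B, C ∈ V and P, Q, R ∈ W, and for each real λ ≠ 0 set α(λ) := A + (λ − λ⁻¹)·B + (λ + λ⁻¹)·C. Then the equation P + (λ − λ⁻¹)·Q + (λ + λ⁻¹)·R + w(α(λ), α(λ)) = 0 holds for all real λ ≠ 0 if and only if the following five equations hold: (1) P + w(A,A) + 2·(w(C,C) − w(B,B)) = 0; (2) Q + w(A,B) + w(B,A) = 0; (3) R + w(A,C) + w(C,A) = 0; (4) w(B,C) + w(C,B) = 0; (5) w(B,B) + w(C,C) = 0. Moreover, in that case P + w(A,A) = −4·w(C,C). -/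
/- STATEMENT 1: For a bilinear map w : V × V → W, fixed A, B, C ∈ V, P, Q, R ∈ W and
α(λ) := A + (λ − λ⁻¹)·B + (λ + λ⁻¹)·C, the equation
P + (λ − λ⁻¹)·Q + (λ + λ⁻¹)·R + w(α(λ), α(λ)) = 0 holds for all real λ ≠ 0 iff the five
listed λ-independent equations hold; moreover, in that case P + w(A,A) = −4·w(C,C). -/
theorem maurer_cartan_coefficient_equations
    {V W : Type*} [AddCommGroup V] [Module ℝ V] [AddCommGroup W] [Module ℝ W]
    (w : V →ₗ[ℝ] V →ₗ[ℝ] W) (A B C : V) (P Q R : W) :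
    ((∀ l : ℝ, l ≠ 0 →
        P + (l - l⁻¹) • Q + (l + l⁻¹) • R +
          w (A + (l - l⁻¹) • B + (l + l⁻¹) • C) (A + (l - l⁻¹) • B + (l + l⁻¹) • C) = 0) ↔
      (P + w A A + (2 : ℝ) • (w C C - w B B) = 0 ∧
       Q + w A B + w B A = 0 ∧
       R + w A C + w C A = 0 ∧
       w B C + w C B = 0 ∧
       w B B + w C C = 0)) ∧
    ((∀ l : ℝ, l ≠ 0 →
        P + (l - l⁻¹) • Q + (l + l⁻¹) • R +
          w (A + (l - l⁻¹) • B + (l + l⁻¹) • C) (A + (l - l⁻¹) • B + (l + l⁻¹) • C) = 0) →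
      P + w A A = (-4 : ℝ) • w C C) := by
  have expand : ∀ l : ℝ,
      w (A + (l - l⁻¹) • B + (l + l⁻¹) • C) (A + (l - l⁻¹) • B + (l + l⁻¹) • C)
      = w A A + (l - l⁻¹) • (w A B + w B A) + (l + l⁻¹) • (w A C + w C A)
        + ((l - l⁻¹) * (l + l⁻¹)) • (w B C + w C B)
        + ((l - l⁻¹) * (l - l⁻¹)) • w B B + ((l + l⁻¹) * (l + l⁻¹)) • w C C := by
    intro l
    simp only [map_add, map_smul, LinearMap.add_apply, LinearMap.smul_apply]
    module
  have key : (∀ l : ℝ, l ≠ 0 →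
        P + (l - l⁻¹) • Q + (l + l⁻¹) • R +
          w (A + (l - l⁻¹) • B + (l + l⁻¹) • C) (A + (l - l⁻¹) • B + (l + l⁻¹) • C) = 0) →
      (P + w A A + (2 : ℝ) • (w C C - w B B) = 0 ∧
       Q + w A B + w B A = 0 ∧
       R + w A C + w C A = 0 ∧
       w B C + w C B = 0 ∧
       w B B + w C C = 0) := by
    intro h
    have h1 := h 1 one_ne_zero
    have h2 := h (-1) (by norm_num)
    have h3 := h 2 (by norm_num)
    have h4 := h (-2) (by norm_num)
    have h5 := h 3 (by norm_num)
    have h6 := h (-3) (by norm_num)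
    rw [expand] at h1 h2 h3 h4 h5 h6
    refine ⟨?_, ?_, ?_, ?_, ?_⟩
    · linear_combination (norm := module) (-(7 : ℝ)/12) • h1 + ((1 : ℝ)/24) • h2
        + ((7 : ℝ)/3) • h3 + ((1 : ℝ)/3) • h4 - ((9 : ℝ)/8) • h5
    · linear_combination (norm := module) (-(5 : ℝ)/12) • h1 + ((5 : ℝ)/12) • h2
        + ((1 : ℝ)/3) • h3 - ((1 : ℝ)/3) • h4
    · linear_combination (norm := module) ((1 : ℝ)/4) • h1 - ((1 : ℝ)/4) • h2
    · linear_combination (norm := module) (-(11 : ℝ)/24) • h1 - ((13 : ℝ)/48) • h2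
        + ((5 : ℝ)/6) • h3 + ((7 : ℝ)/30) • h4 - ((27 : ℝ)/80) • h5
    · linear_combination (norm := module) ((13 : ℝ)/24) • h1 + ((11 : ℝ)/48) • h2
        - ((7 : ℝ)/6) • h3 - ((1 : ℝ)/6) • h4 + ((9 : ℝ)/16) • h5
  constructor
  · constructor
    · exact key
    · rintro ⟨e1, e2, e3, e4, e5⟩ l hl
      rw [expand]
      have hll : l * l⁻¹ = 1 := mul_inv_cancel₀ hl
      linear_combination (norm := match_scalars <;> (field_simp; try ring)) e1
        + (l - l⁻¹) • e2 + (l + l⁻¹) • e3 + ((l - l⁻¹) * (l + l⁻¹)) • e4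
        + ((l - l⁻¹) * (l - l⁻¹) + 2) • e5
  · intro h
    obtain ⟨e1, e2, e3, e4, e5⟩ := key h
    linear_combination (norm := module) e1 + (2 : ℝ) • e5
end

section
/- Let 𝔤 be a real Lie algebra with an involutive Lie algebra automorphism σ, and let 𝔨 = {x ∈ 𝔤 : σ(x) = x} and 𝔭 = {x ∈ 𝔤 : σ(x) = −x}. Let X be a real vector space, let α_𝔨 : X → 𝔨 and α_𝔭 : X → 𝔭 be linear maps, and let δ_𝔨 : X × X → 𝔨 and δ_𝔭 : X × X → 𝔭 be alternating bilinear maps. For each λ ∈ ℝ define the 𝔤-valued alternating bilinear map MC_λ(u,v) := δ_𝔨(u,v) + λ·δ_𝔭(u,v) + [α_𝔨(u) + λ·α_𝔭(u), α_𝔨(v) + λ·α_𝔭(v)]. Then MC_λ = 0 for every λ ∈ ℝ if and only if MC_1 = 0 and [α_𝔭(u), α_𝔭(v)] = 0 for all u, v ∈ X. -/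
/-!
Expanding the bracket, `MC_λ = A + λ B + λ² C` with `C = [α_𝔭 u, α_𝔭 v]`, so `MC_λ` vanishes
identically iff it vanishes at `λ = ±1` and `C = 0`. Since `σ` fixes the `𝔨`-parts and negates
the `𝔭`-parts, `σ (MC_λ) = MC_{-λ}`; hence `MC_1 = 0` already forces `MC_{-1} = 0`.
-/

section Quadratic

variable {K M : Type*} [Field K] [AddCommGroup M] [Module K M]

theorem eq_zero_of_add_eq_zero_of_sub_eq_zero {a b : M} (h2 : (2 : K) ≠ 0)
    (hadd : a + b = 0) (hsub : a - b = 0) : a = 0 := by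
  have : (2 : K) • a = 0 := by
    rw [two_smul]
    calc a + a = (a + b) + (a - b) := by abel
      _ = 0 := by rw [hadd, hsub, add_zero]
  exact (smul_eq_zero.mp this).resolve_left h2

theorem forall_eq_zero_iff_of_eq_quadratic {q : K → M} {a b c : M} (h2 : (2 : K) ≠ 0)
    (hq : ∀ l, q l = a + l • b + (l * l) • c) :
    (∀ l, q l = 0) ↔ q 1 = 0 ∧ q (-1) = 0 ∧ c = 0 := by
  have h1 : q 1 = a + b + c := by simpa using hq 1
  have hm : q (-1) = a - b + c := by simpa [sub_eq_add_neg] using hq (-1)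
  constructor
  · intro h
    have ha : a = 0 := by simpa using (hq 0).symm.trans (h 0)
    have hadd : c + b = 0 := by
      have := h 1
      rwa [h1, ha, zero_add, add_comm] at this
    have hsub : c - b = 0 := by
      have := h (-1)
      rwa [hm, ha, zero_sub, neg_add_eq_sub] at this
    exact ⟨h 1, h (-1), eq_zero_of_add_eq_zero_of_sub_eq_zero h2 hadd hsub⟩
  · rintro ⟨hq1, hqm, rfl⟩ l
    rw [h1, add_zero] at hq1
    rw [hm, add_zero] at hqm
    have ha : a = 0 := eq_zero_of_add_eq_zero_of_sub_eq_zero h2 hq1 hqm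
    have hb : b = 0 := by rwa [ha, zero_add] at hq1
    simp [hq, ha, hb]

end Quadratic

section LieFamily

variable {R L : Type*} [CommRing R] [LieRing L] [LieAlgebra R L]

theorem add_smul_add_lie_add_smul (l : R) (d₀ d₁ a b c e : L) :
    d₀ + l • d₁ + ⁅a + l • b, c + l • e⁆ =
      (d₀ + ⁅a, c⁆) + l • (d₁ + ⁅a, e⁆ + ⁅b, c⁆) + (l * l) • ⁅b, e⁆ := by
  simp only [lie_add, add_lie, lie_smul, smul_lie, smul_add, smul_smul]
  abel

theorem LieHom.map_add_smul_add_lie_add_smul (σ : L →ₗ⁅R⁆ L) (l : R)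
    {d₀ d₁ a b c e : L} (hd₀ : σ d₀ = d₀) (ha : σ a = a) (hc : σ c = c)
    (hd₁ : σ d₁ = -d₁) (hb : σ b = -b) (he : σ e = -e) :
    σ (d₀ + l • d₁ + ⁅a + l • b, c + l • e⁆) =
      d₀ + (-l) • d₁ + ⁅a + (-l) • b, c + (-l) • e⁆ := by
  simp only [map_add, map_smul, LieHom.map_lie, hd₀, ha, hc, hd₁, hb, he, smul_neg, neg_smul]

end LieFamily

theorem curved_flat_characterization_general
    {L : Type*} [LieRing L] [LieAlgebra ℝ L]
    (σ : L →ₗ⁅ℝ⁆ L)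
    {X : Type*} [AddCommGroup X] [Module ℝ X]
    (αk αp : X →ₗ[ℝ] L)
    (hαk : ∀ x, σ (αk x) = αk x) (hαp : ∀ x, σ (αp x) = -(αp x))
    (δk δp : X →ₗ[ℝ] X →ₗ[ℝ] L)
    (hδk : ∀ u v, σ (δk u v) = δk u v) (hδp : ∀ u v, σ (δp u v) = -(δp u v)) :
    (∀ (l : ℝ) (u v : X),
        δk u v + l • δp u v + ⁅αk u + l • αp u, αk v + l • αp v⁆ = 0) ↔
    ((∀ u v : X, δk u v + δp u v + ⁅αk u + αp u, αk v + αp v⁆ = 0) ∧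
     (∀ u v : X, ⁅αp u, αp v⁆ = 0)) := by
  have hfamily : ∀ u v : X,
      (∀ l : ℝ, δk u v + l • δp u v + ⁅αk u + l • αp u, αk v + l • αp v⁆ = 0) ↔
        δk u v + δp u v + ⁅αk u + αp u, αk v + αp v⁆ = 0 ∧ ⁅αp u, αp v⁆ = 0 := by
    intro u v
    rw [forall_eq_zero_iff_of_eq_quadratic two_ne_zero fun l =>
        add_smul_add_lie_add_smul l (δk u v) (δp u v) (αk u) (αp u) (αk v) (αp v),
      ← σ.map_add_smul_add_lie_add_smul 1
        (hδk u v) (hαk u) (hαk v) (hδp u v) (hαp u) (hαp v)]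
    simp only [one_smul]
    exact ⟨fun ⟨h1, _, hc⟩ => ⟨h1, hc⟩, fun ⟨h1, hc⟩ => ⟨h1, by rw [h1, map_zero], hc⟩⟩
  exact ⟨fun h => ⟨fun u v => ((hfamily u v).1 (h · u v)).1,
      fun u v => ((hfamily u v).1 (h · u v)).2⟩,
    fun ⟨h1, hc⟩ l u v => (hfamily u v).2 ⟨h1 u v, hc u v⟩ l⟩

theorem curved_flat_characterization
    {L : Type*} [LieRing L] [LieAlgebra ℝ L]
    (σ : L →ₗ⁅ℝ⁆ L) (hσinv : ∀ x, σ (σ x) = x)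
    {X : Type*} [AddCommGroup X] [Module ℝ X]
    (αk αp : X →ₗ[ℝ] L)
    (hαk : ∀ x, σ (αk x) = αk x) (hαp : ∀ x, σ (αp x) = -(αp x))
    (δk δp : X →ₗ[ℝ] X →ₗ[ℝ] L)
    (hδk_alt : ∀ u, δk u u = 0) (hδp_alt : ∀ u, δp u u = 0)
    (hδk : ∀ u v, σ (δk u v) = δk u v) (hδp : ∀ u v, σ (δp u v) = -(δp u v)) :
    (∀ (l : ℝ) (u v : X),
        δk u v + l • δp u v + ⁅αk u + l • αp u, αk v + l • αp v⁆ = 0) ↔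
    ((∀ u v : X, δk u v + δp u v + ⁅αk u + αp u, αk v + αp v⁆ = 0) ∧
     (∀ u v : X, ⁅αp u, αp v⁆ = 0)) :=
  curved_flat_characterization_general σ αk αp hαk hαp δk δp hδk hδp
end

section
/- Let n ≥ 0 and let W be a real linear subspace of the space of complex symmetric (n+1)×(n+1) matrices such that conj(Z₁)·Z₂ = conj(Z₂)·Z₁ for all Z₁, Z₂ ∈ W, where conj denotes entrywise complex conjugation. Then dim_ℝ W ≤ n+1. Moreover, the space of real diagonal (n+1)×(n+1) matrices is such a subspace of real dimension exactly n+1. -/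
/-!
Regard `ℂⁿ` as the real Euclidean space `ℝ²ⁿ` and let a matrix `Z` act by the real-linear map
`T_Z x = Z x̄`. For symmetric `Z` the operator `T_Z` is symmetric, the condition
`Z̄₁ Z₂ = Z̄₂ Z₁` says exactly that `T_{Z₁}` and `T_{Z₂}` commute, and every `T_Z` anticommutes
with the complex structure `J = i •`.

A commuting family `S` of symmetric operators has a separating vector `x` (take `x` outside the
orthogonal complements of the finitely many nonzero joint eigenspaces), so `T ↦ T x` embeds `S`
into `ℝ²ⁿ`. Since `J T₁ T₂` is skew, `⟪T₁ x, J T₂ x⟫ = 0`: the image `S x` is orthogonal to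
`J (S x)`, hence `2 dim S ≤ 2n`.
-/

open Matrix Module LinearMap Submodule
open scoped InnerProductSpace ComplexConjugate

section SeparatingVector

variable {V : Type*} [NormedAddCommGroup V] [InnerProductSpace ℝ V]

theorem inner_apply_skew_apply_eq_zero {T₁ T₂ J : Module.End ℝ V}
    (h₁ : T₁.IsSymmetric) (h₂ : T₂.IsSymmetric) (hcomm : Commute T₁ T₂)
    (hJ : ∀ x y, ⟪J x, y⟫_ℝ = -⟪x, J y⟫_ℝ)
    (hJ₁ : ∀ x, T₁ (J x) = -J (T₁ x)) (hJ₂ : ∀ x, T₂ (J x) = -J (T₂ x)) (x : V) :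
    ⟪T₁ x, J (T₂ x)⟫_ℝ = 0 := by
  have hT : T₁ (T₂ x) = T₂ (T₁ x) := LinearMap.congr_fun hcomm.eq x
  have : ⟪T₁ x, J (T₂ x)⟫_ℝ = -⟪T₁ x, J (T₂ x)⟫_ℝ := calc
    ⟪T₁ x, J (T₂ x)⟫_ℝ = -⟪x, J (T₁ (T₂ x))⟫_ℝ := by rw [h₁, hJ₁, inner_neg_right]
    _ = ⟪J x, T₂ (T₁ x)⟫_ℝ := by rw [hJ, hT]
    _ = -⟪J (T₂ x), T₁ x⟫_ℝ := by rw [← h₂, hJ₂, inner_neg_left]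
    _ = -⟪T₁ x, J (T₂ x)⟫_ℝ := by rw [real_inner_comm]
  linarith

variable [FiniteDimensional ℝ V]

theorem exists_separating_vector_of_isSymmetric_of_commute (S : Submodule ℝ (Module.End ℝ V))
    (hsym : ∀ T ∈ S, T.IsSymmetric) (hcomm : ∀ T₁ ∈ S, ∀ T₂ ∈ S, Commute T₁ T₂) :
    ∃ x : V, ∀ T ∈ S, T x = 0 → T = 0 := by
  let E : (S → ℝ) → Submodule ℝ V := fun χ ↦ ⨅ T : S, End.eigenspace (T : Module.End ℝ V) (χ T)
  have hE_top : ⨆ χ, E χ = ⊤ := IsSymmetric.iSup_iInf_eq_top_of_commute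
    (fun T ↦ hsym T T.2) (fun T₁ T₂ _ ↦ hcomm _ T₁.2 _ T₂.2)
  have : Finite {χ // E χ ≠ ⊥} := WellFoundedGT.finite_ne_bot_of_iSupIndep
    (IsSymmetric.orthogonalFamily_iInf_eigenspaces (fun T : S ↦ hsym T T.2)).independent
  have : Fintype {χ // E χ ≠ ⊥} := Fintype.ofFinite _
  obtain ⟨x, hx⟩ : ∃ x : V, ∀ χ : {χ // E χ ≠ ⊥}, x ∉ (E χ)ᗮ := by
    have := Submodule.iUnion_ssubset_of_forall_ne_top_of_card_lt Finset.univ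
      (fun χ : {χ // E χ ≠ ⊥} ↦ (E χ)ᗮ) (fun χ ↦ by simpa using χ.2) (by simp)
    simpa [Set.ssubset_univ_iff, Set.eq_univ_iff_forall] using this
  refine ⟨x, fun T hT hTx ↦ LinearMap.ker_eq_top.mp (eq_top_iff.mpr (hE_top ▸ iSup_le fun χ ↦ ?_))⟩
  by_cases hχ : E χ = ⊥
  · simp [hχ]
  have hmem : ∀ y ∈ E χ, T y = χ ⟨T, hT⟩ • y := fun y hy ↦
    End.mem_eigenspace_iff.mp (Submodule.mem_iInf _ |>.mp hy ⟨T, hT⟩)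
  obtain ⟨y, hy, hyx⟩ : ∃ y ∈ E χ, ⟪y, x⟫_ℝ ≠ 0 := by
    simpa [Submodule.mem_orthogonal] using hx ⟨χ, hχ⟩
  have hχT : χ ⟨T, hT⟩ = 0 := by
    have := hsym T hT y x
    rw [hTx, inner_zero_right, hmem y hy, real_inner_smul_left] at this
    exact (mul_eq_zero.mp this).resolve_right hyx
  intro z hz
  simp [hmem z hz, hχT]

theorem two_mul_finrank_le_of_anticommute (S : Submodule ℝ (Module.End ℝ V))
    (hsym : ∀ T ∈ S, T.IsSymmetric) (hcomm : ∀ T₁ ∈ S, ∀ T₂ ∈ S, Commute T₁ T₂)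
    {J : Module.End ℝ V} (hJ : ∀ x y, ⟪J x, y⟫_ℝ = -⟪x, J y⟫_ℝ) (hJ_inj : Function.Injective J)
    (hanti : ∀ T ∈ S, ∀ x, T (J x) = -J (T x)) :
    2 * finrank ℝ S ≤ finrank ℝ V := by
  obtain ⟨x, hx⟩ := exists_separating_vector_of_isSymmetric_of_commute S hsym hcomm
  let U := LinearMap.range ((LinearMap.applyₗ x).domRestrict S)
  have hU : finrank ℝ U = finrank ℝ S := LinearMap.finrank_range_of_inj <|
    LinearMap.ker_eq_bot.mp <| LinearMap.ker_eq_bot'.mpr fun T hTx ↦ Subtype.ext (hx T T.2 hTx)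
  have hJU : U.map J ≤ Uᗮ := by
    rintro _ ⟨_, ⟨⟨T₂, hT₂⟩, rfl⟩, rfl⟩
    rw [mem_orthogonal]
    rintro _ ⟨⟨T₁, hT₁⟩, rfl⟩
    exact inner_apply_skew_apply_eq_zero (hsym _ hT₁) (hsym _ hT₂) (hcomm _ hT₁ _ hT₂) hJ
      (hanti _ hT₁) (hanti _ hT₂) x
  calc 2 * finrank ℝ S = finrank ℝ U + finrank ℝ (U.map J) := by
        rw [(Submodule.equivMapOfInjective J hJ_inj U).finrank_eq.symm, hU, two_mul]
    _ ≤ finrank ℝ U + finrank ℝ Uᗮ := by gcongr; exact Submodule.finrank_mono hJU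
    _ = finrank ℝ V := U.finrank_add_finrank_orthogonal

end SeparatingVector

section ConjMulVec

variable {ι : Type*} [Fintype ι]

theorem star_mulVec_star {m n α : Type*} [Fintype n] [CommSemiring α] [StarRing α]
    (A : Matrix m n α) (v : n → α) : star (A *ᵥ star v) = A.map star *ᵥ v := by
  rw [star_mulVec, star_star, ← mulVec_transpose, conjTranspose_transpose]

theorem real_inner_eq_re_star_dotProduct (x y : EuclideanSpace ℂ ι) :
    ⟪x, y⟫_ℝ = (star (WithLp.ofLp x) ⬝ᵥ WithLp.ofLp y).re := by
  simp [PiLp.inner_apply, Complex.inner, dotProduct, Complex.re_sum, mul_comm]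

theorem real_inner_I_smul_left (x y : EuclideanSpace ℂ ι) :
    ⟪Complex.I • x, y⟫_ℝ = -⟪x, Complex.I • y⟫_ℝ := by
  simp [real_inner_eq_re_star_dotProduct, star_smul]

noncomputable def mulVecConjₗ : Matrix ι ι ℂ →ₗ[ℝ] Module.End ℝ (EuclideanSpace ℂ ι) :=
  LinearMap.mk₂ ℝ (fun Z x ↦ WithLp.toLp 2 (Z *ᵥ star (WithLp.ofLp x)))
    (fun Z₁ Z₂ x ↦ by rw [add_mulVec, WithLp.toLp_add])
    (fun c Z x ↦ by rw [smul_mulVec, WithLp.toLp_smul])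
    (fun Z x y ↦ by rw [WithLp.ofLp_add, star_add, mulVec_add, WithLp.toLp_add])
    (fun c Z x ↦ by
      rw [WithLp.ofLp_smul, star_smul, star_trivial, mulVec_smul, WithLp.toLp_smul])

@[simp]
theorem mulVecConjₗ_apply (Z : Matrix ι ι ℂ) (x : EuclideanSpace ℂ ι) :
    mulVecConjₗ Z x = WithLp.toLp 2 (Z *ᵥ star (WithLp.ofLp x)) := rfl

theorem mulVecConjₗ_injective : Function.Injective (mulVecConjₗ (ι := ι)) := by
  classical
  refine LinearMap.ker_eq_bot.mp (LinearMap.ker_eq_bot'.mpr fun Z hZ ↦ ?_)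
  ext i j
  simpa [Pi.star_single, mulVec_single_one] using
    congr(WithLp.ofLp ($hZ (EuclideanSpace.single j 1)) i)

theorem mulVecConjₗ_I_smul (Z : Matrix ι ι ℂ) (x : EuclideanSpace ℂ ι) :
    mulVecConjₗ Z (Complex.I • x) = -(Complex.I • mulVecConjₗ Z x) := by
  rw [mulVecConjₗ_apply, mulVecConjₗ_apply, WithLp.ofLp_smul, star_smul, mulVec_smul]
  simp

theorem commute_mulVecConjₗ {Z₁ Z₂ : Matrix ι ι ℂ} (h : Z₁.map conj * Z₂ = Z₂.map conj * Z₁) :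
    Commute (mulVecConjₗ Z₁) (mulVecConjₗ Z₂) := by
  have h' : Z₁ * Z₂.map star = Z₂ * Z₁.map star := by
    simpa [Matrix.map_mul, Function.comp_def] using congr(Matrix.map $h conj)
  refine LinearMap.ext fun x ↦ ?_
  simp only [Module.End.mul_apply, mulVecConjₗ_apply, star_mulVec_star, mulVec_mulVec, h']

theorem isSymmetric_mulVecConjₗ {Z : Matrix ι ι ℂ} (hZ : Zᵀ = Z) :
    (mulVecConjₗ Z).IsSymmetric := by
  intro x y
  have hZH : Zᴴᵀ = Zᴴ := by rw [← conjTranspose_transpose_eq_transpose_conjTranspose, hZ]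
  calc ⟪mulVecConjₗ Z x, y⟫_ℝ = (WithLp.ofLp x ⬝ᵥ (Zᴴ *ᵥ WithLp.ofLp y)).re := by
        rw [real_inner_eq_re_star_dotProduct, mulVecConjₗ_apply, WithLp.ofLp_toLp, star_mulVec,
          star_star, ← dotProduct_mulVec]
    _ = (WithLp.ofLp y ⬝ᵥ (Zᴴ *ᵥ WithLp.ofLp x)).re := by
        rw [dotProduct_comm (WithLp.ofLp x), ← vecMul_transpose, ← dotProduct_mulVec, hZH]
    _ = ⟪x, mulVecConjₗ Z y⟫_ℝ := by
        rw [real_inner_eq_re_star_dotProduct, mulVecConjₗ_apply, WithLp.ofLp_toLp,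
          star_dotProduct, star_mulVec, star_star, ← dotProduct_mulVec, Complex.star_def,
          Complex.conj_re]

theorem finrank_le_card_of_map_conj_mul_comm (W : Submodule ℝ (Matrix ι ι ℂ))
    (hsymm : ∀ Z ∈ W, Zᵀ = Z)
    (hcomm : ∀ Z₁ ∈ W, ∀ Z₂ ∈ W, Z₁.map conj * Z₂ = Z₂.map conj * Z₁) :
    finrank ℝ W ≤ Fintype.card ι := by
  have hJ_inj : Function.Injective (Complex.I • LinearMap.id : Module.End ℝ (EuclideanSpace ℂ ι)) :=
    smul_right_injective _ Complex.I_ne_zero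
  have key := two_mul_finrank_le_of_anticommute (W.map mulVecConjₗ)
    (by rintro _ ⟨Z, hZ, rfl⟩; exact isSymmetric_mulVecConjₗ (hsymm Z hZ))
    (by rintro _ ⟨Z₁, hZ₁, rfl⟩ _ ⟨Z₂, hZ₂, rfl⟩; exact commute_mulVecConjₗ (hcomm Z₁ hZ₁ Z₂ hZ₂))
    (fun x y ↦ real_inner_I_smul_left x y) hJ_inj
    (by rintro _ ⟨Z, -, rfl⟩ x; exact mulVecConjₗ_I_smul Z x)
  rwa [← (Submodule.equivMapOfInjective _ mulVecConjₗ_injective W).finrank_eq,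
    finrank_real_of_complex, finrank_euclideanSpace, mul_le_mul_iff_right₀ two_pos] at key

end ConjMulVec

section RealDiagonal

variable {ι : Type*} [DecidableEq ι]

variable (ι) in
noncomputable def realDiagonal : Submodule ℝ (Matrix ι ι ℂ) :=
  LinearMap.range <|
    (diagonalLinearMap ι ℝ ℂ).comp (LinearMap.compLeft Complex.ofRealAm.toLinearMap ι)

theorem mem_realDiagonal {Z : Matrix ι ι ℂ} :
    Z ∈ realDiagonal ι ↔ ∃ d : ι → ℝ, Z = diagonal (fun i ↦ (d i : ℂ)) := by
  simp only [realDiagonal, LinearMap.mem_range, eq_comm]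
  rfl

theorem transpose_eq_self_of_mem_realDiagonal {Z : Matrix ι ι ℂ} (hZ : Z ∈ realDiagonal ι) :
    Zᵀ = Z := by
  obtain ⟨d, rfl⟩ := mem_realDiagonal.mp hZ
  exact diagonal_transpose _

theorem map_conj_mul_comm_of_mem_realDiagonal [Fintype ι] {Z₁ Z₂ : Matrix ι ι ℂ}
    (hZ₁ : Z₁ ∈ realDiagonal ι) (hZ₂ : Z₂ ∈ realDiagonal ι) :
    Z₁.map conj * Z₂ = Z₂.map conj * Z₁ := by
  obtain ⟨d₁, rfl⟩ := mem_realDiagonal.mp hZ₁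
  obtain ⟨d₂, rfl⟩ := mem_realDiagonal.mp hZ₂
  simp [diagonal_map, mul_comm]

theorem finrank_realDiagonal [Fintype ι] : finrank ℝ (realDiagonal ι) = Fintype.card ι := by
  rw [realDiagonal, LinearMap.finrank_range_of_inj, Module.finrank_fintype_fun_eq_card]
  exact diagonal_injective.comp (Function.Injective.comp_left Complex.ofReal_injective)

end RealDiagonal

theorem abelian_subspace_sp_over_u (n : ℕ) :
    (∀ W : Submodule ℝ (Matrix (Fin (n + 1)) (Fin (n + 1)) ℂ),
        (∀ Z ∈ W, Zᵀ = Z) →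
        (∀ Z₁ ∈ W, ∀ Z₂ ∈ W,
          Z₁.map (starRingEnd ℂ) * Z₂ = Z₂.map (starRingEnd ℂ) * Z₁) →
        Module.finrank ℝ W ≤ n + 1) ∧
    (∃ D : Submodule ℝ (Matrix (Fin (n + 1)) (Fin (n + 1)) ℂ),
        (D : Set (Matrix (Fin (n + 1)) (Fin (n + 1)) ℂ)) =
          {Z | ∃ d : Fin (n + 1) → ℝ, Z = Matrix.diagonal (fun i => (d i : ℂ))} ∧
        (∀ Z ∈ D, Zᵀ = Z) ∧
        (∀ Z₁ ∈ D, ∀ Z₂ ∈ D,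
          Z₁.map (starRingEnd ℂ) * Z₂ = Z₂.map (starRingEnd ℂ) * Z₁) ∧
        Module.finrank ℝ D = n + 1) := by
  refine ⟨fun W hsymm hcomm ↦ ?_, realDiagonal _, Set.ext fun _ ↦ mem_realDiagonal,
    fun _ ↦ transpose_eq_self_of_mem_realDiagonal, fun _ hZ₁ _ hZ₂ ↦
      map_conj_mul_comm_of_mem_realDiagonal hZ₁ hZ₂, by simp [finrank_realDiagonal]⟩
  simpa using finrank_le_card_of_map_conj_mul_comm W hsymm hcomm
end

section
/- Let n ≥ 1 and let J = diag(I_n, −1) ∈ M_{n+1}(ℝ). Define 𝔲₋ = {X ∈ M_{n+1}(ℝ) : tr(X) = 0 and J·Xᵗ·J = X} (equivalently, the traceless matrices of block form [[A, b],[−bᵗ, c]] with A a symmetric n×n matrix, b ∈ ℝⁿ a column, and c ∈ ℝ), and let 𝔭' = {X ∈ 𝔲₋ : the upper-left n×n block of X is 0 and X_{n+1,n+1} = 0} (block form [[0, b],[−bᵗ, 0]]). Let π : 𝔲₋ → 𝔭' be the linear projection sending [[A, b],[−bᵗ, c]] to [[0, b],[−bᵗ, 0]]. Then there exists an n-dimensional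 linear subspace 𝔞 ⊆ 𝔲₋ with XY = YX for all X, Y ∈ 𝔞 and π(𝔞) = 𝔭'. Explicitly, 𝔞 is spanned by E₁, …, E_{n−1}, Ê, where for 1 ≤ i ≤ n−1 the matrix E_i has entries (E_i)_{i,n} = (E_i)_{i,n+1} = 1, (E_i)_{n,i} = 1, (E_i)_{n+1,i} = −1 and all other entries 0, and Ê has entries Ê_{n,n} = Ê_{n,n+1} = 1, Ê_{n+1,n} = Ê_{n+1,n+1} = −1 and all other entries 0. -/
open Matrix

/-- J = diag(I_n, −1) in M_{n+1}(ℝ). -/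
noncomputable def Jmat (n : ℕ) : Matrix (Fin (n + 1)) (Fin (n + 1)) ℝ :=
  Matrix.diagonal fun i => if (i : ℕ) < n then 1 else -1

/-- 𝔲₋ = {X ∈ M_{n+1}(ℝ) : tr(X) = 0 and J·Xᵗ·J = X}, i.e. traceless matrices of block
form [[A, b],[−bᵗ, c]] with A symmetric. -/
def uminusSet (n : ℕ) : Set (Matrix (Fin (n + 1)) (Fin (n + 1)) ℝ) :=
  {X | Matrix.trace X = 0 ∧ Jmat n * Xᵀ * Jmat n = X}

/-- 𝔭' = {X ∈ 𝔲₋ : upper-left n×n block of X is 0 and X_{n+1,n+1} = 0}, i.e. block form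
[[0, b],[−bᵗ, 0]]. -/
def pprimeSet (n : ℕ) : Set (Matrix (Fin (n + 1)) (Fin (n + 1)) ℝ) :=
  {X | X ∈ uminusSet n ∧
    (∀ i j : Fin (n + 1), (i : ℕ) < n → (j : ℕ) < n → X i j = 0) ∧
    X (Fin.last n) (Fin.last n) = 0}

/-- The linear projection π : 𝔲₋ → 𝔭' sending [[A, b],[−bᵗ, c]] to [[0, b],[−bᵗ, 0]],
defined on all of M_{n+1}(ℝ) by keeping only the entries (i, n+1) with i ≤ n and
(n+1, j) with j ≤ n. -/
def piProj (n : ℕ) :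
    Matrix (Fin (n + 1)) (Fin (n + 1)) ℝ →ₗ[ℝ] Matrix (Fin (n + 1)) (Fin (n + 1)) ℝ where
  toFun X := Matrix.of fun i j =>
    if ((i : ℕ) < n ∧ (j : ℕ) = n) ∨ ((i : ℕ) = n ∧ (j : ℕ) < n) then X i j else 0
  map_add' X Y := by
    ext i j
    simp only [Matrix.of_apply, Matrix.add_apply]
    split <;> simp
  map_smul' r X := by
    ext i j
    simp only [Matrix.of_apply, Matrix.smul_apply, RingHom.id_apply]
    split <;> simp

/-- The matrix E_i (for 1 ≤ i ≤ n−1, here 0-indexed by i ∈ {0,…,n−2}): its i-th row is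
(0,…,0,1,1) and its i-th column is (0,…,0,1,−1)ᵗ, all other entries 0. -/
noncomputable def Ei (n i : ℕ) : Matrix (Fin (n + 1)) (Fin (n + 1)) ℝ :=
  Matrix.of fun a b =>
    if (a : ℕ) = i ∧ ((b : ℕ) = n - 1 ∨ (b : ℕ) = n) then 1
    else if (b : ℕ) = i ∧ (a : ℕ) = n - 1 then 1
    else if (b : ℕ) = i ∧ (a : ℕ) = n then -1
    else 0

/-- The matrix Ê: its n-th row is (0,…,0,1,1), its (n+1)-st row is (0,…,0,−1,−1), all
other entries 0. -/
noncomputable def Ehat (n : ℕ) : Matrix (Fin (n + 1)) (Fin (n + 1)) ℝ :=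
  Matrix.of fun a b =>
    if (a : ℕ) = n - 1 ∧ ((b : ℕ) = n - 1 ∨ (b : ℕ) = n) then 1
    else if (a : ℕ) = n ∧ ((b : ℕ) = n - 1 ∨ (b : ℕ) = n) then -1
    else 0

/- STATEMENT 12: the span 𝔞 of E₁, …, E_{n−1}, Ê is an n-dimensional subspace of 𝔲₋
consisting of pairwise commuting matrices, and π(𝔞) = 𝔭'. -/

namespace AbelAux

variable (n : ℕ)

/-- standard basis vector -/
def ev (k : ℕ) : Fin (n + 1) → ℝ := fun a => if (a : ℕ) = k then 1 else 0

def pv : Fin (n + 1) → ℝ := fun a => ev n (n - 1) a + ev n n a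
def qv : Fin (n + 1) → ℝ := fun a => ev n (n - 1) a - ev n n a

lemma sum_ev_ev (j k : ℕ) (hj : j ≤ n) :
    ∑ a : Fin (n + 1), ev n j a * ev n k a = if j = k then 1 else 0 := by
  rw [Finset.sum_eq_single (⟨j, by omega⟩ : Fin (n + 1))]
  · simp only [ev]
    by_cases h : j = k <;> simp [h]
  · intro b _ hb
    have : (b : ℕ) ≠ j := fun h => hb (Fin.ext h)
    simp [ev, this]
  · simp

lemma mulVV (u v w x : Fin (n + 1) → ℝ) :
    vecMulVec u v * vecMulVec w x = (∑ a, v a * w a) • vecMulVec u x := by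
  ext i j
  simp only [Matrix.mul_apply, Matrix.vecMulVec_apply, Matrix.smul_apply, smul_eq_mul,
    Finset.sum_mul]
  exact Finset.sum_congr rfl fun k _ => by ring

lemma trace_vMv (u v : Fin (n + 1) → ℝ) :
    Matrix.trace (vecMulVec u v) = ∑ a, u a * v a := by
  simp [Matrix.trace, Matrix.diag, Matrix.vecMulVec_apply]

variable {n}

lemma sum_pq (hn : 1 ≤ n) : ∑ a, pv n a * qv n a = 0 := by
  simp only [pv, qv, add_mul, mul_sub, Finset.sum_add_distrib, Finset.sum_sub_distrib]
  rw [sum_ev_ev n (n-1) (n-1) (by omega), sum_ev_ev n (n-1) n (by omega),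
    sum_ev_ev n n (n-1) le_rfl, sum_ev_ev n n n le_rfl]
  have h : n - 1 ≠ n := by omega
  simp [h, h.symm]

lemma sum_qp (hn : 1 ≤ n) : ∑ a, qv n a * pv n a = 0 := by
  simp only [pv, qv, sub_mul, mul_add, Finset.sum_add_distrib, Finset.sum_sub_distrib]
  rw [sum_ev_ev n (n-1) (n-1) (by omega), sum_ev_ev n (n-1) n (by omega),
    sum_ev_ev n n (n-1) le_rfl, sum_ev_ev n n n le_rfl]
  have h : n - 1 ≠ n := by omega
  simp [h, h.symm]

lemma sum_pe {j : ℕ} (hj : j < n - 1) : ∑ a, pv n a * ev n j a = 0 := by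
  simp only [pv, add_mul, Finset.sum_add_distrib]
  rw [sum_ev_ev n (n-1) j (by omega), sum_ev_ev n n j le_rfl]
  have h1 : n - 1 ≠ j := by omega
  have h2 : n ≠ j := by omega
  simp [h1, h2]

lemma sum_ep {j : ℕ} (hj : j < n - 1) : ∑ a, ev n j a * pv n a = 0 := by
  simp only [pv, mul_add, Finset.sum_add_distrib]
  rw [sum_ev_ev n j (n-1) (by omega), sum_ev_ev n j n (by omega)]
  have h1 : j ≠ n - 1 := by omega
  have h2 : j ≠ n := by omega
  simp [h1, h2]

lemma sum_eq' {j : ℕ} (hj : j < n - 1) : ∑ a, ev n j a * qv n a = 0 := by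
  simp only [qv, mul_sub, Finset.sum_sub_distrib]
  rw [sum_ev_ev n j (n-1) (by omega), sum_ev_ev n j n (by omega)]
  have h1 : j ≠ n - 1 := by omega
  have h2 : j ≠ n := by omega
  simp [h1, h2]

lemma sum_qe {j : ℕ} (hj : j < n - 1) : ∑ a, qv n a * ev n j a = 0 := by
  simp only [qv, sub_mul, Finset.sum_sub_distrib]
  rw [sum_ev_ev n (n-1) j (by omega), sum_ev_ev n n j le_rfl]
  have h1 : n - 1 ≠ j := by omega
  have h2 : n ≠ j := by omega
  simp [h1, h2]

lemma Ei_eq {i : ℕ} (hi : i < n - 1) :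
    Ei n i = vecMulVec (ev n i) (pv n) + vecMulVec (qv n) (ev n i) := by
  ext a b
  simp only [Ei, Matrix.of_apply, Matrix.add_apply, Matrix.vecMulVec_apply, ev, pv, qv]
  split_ifs <;> first | (exfalso; omega) | norm_num

lemma Ehat_eq (hn : 1 ≤ n) : Ehat n = vecMulVec (qv n) (pv n) := by
  ext a b
  simp only [Ehat, Matrix.of_apply, Matrix.vecMulVec_apply, ev, pv, qv]
  split_ifs <;> first | (exfalso; omega) | norm_num

/-- the sign vector of J -/
def eps (n : ℕ) : Fin (n + 1) → ℝ := fun a => if (a : ℕ) < n then 1 else -1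

lemma Jconj (u v : Fin (n + 1) → ℝ) :
    Jmat n * (vecMulVec u v)ᵀ * Jmat n
      = vecMulVec (fun a => eps n a * v a) (fun b => eps n b * u b) := by
  ext a b
  simp only [Jmat, Matrix.diagonal_mul, Matrix.mul_diagonal, Matrix.transpose_apply,
    Matrix.vecMulVec_apply, eps]
  ring

lemma eps_pv (hn : 1 ≤ n) : (fun a => eps n a * pv n a) = qv n := by
  funext a
  simp only [eps, pv, qv, ev]
  split_ifs <;> first | (exfalso; omega) | norm_num

lemma eps_qv (hn : 1 ≤ n) : (fun a => eps n a * qv n a) = pv n := by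
  funext a
  simp only [eps, pv, qv, ev]
  split_ifs <;> first | (exfalso; omega) | norm_num

lemma eps_ev {i : ℕ} (hi : i < n) : (fun a => eps n a * ev n i a) = ev n i := by
  funext a
  simp only [eps, ev]
  split_ifs <;> first | (exfalso; omega) | norm_num

lemma Ei_mem_uminus {i : ℕ} (hi : i < n - 1) : Ei n i ∈ uminusSet n := by
  have hn : 1 ≤ n := by omega
  constructor
  · rw [Ei_eq hi, Matrix.trace_add, trace_vMv, trace_vMv, sum_ep hi, sum_qe hi, add_zero]
  · rw [Ei_eq hi, Matrix.transpose_add, Matrix.mul_add, Matrix.add_mul, Jconj, Jconj,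
      eps_pv hn, eps_qv hn, eps_ev (by omega : i < n)]
    exact add_comm _ _

lemma Ehat_mem_uminus (hn : 1 ≤ n) : Ehat n ∈ uminusSet n := by
  constructor
  · rw [Ehat_eq hn, trace_vMv, sum_qp hn]
  · rw [Ehat_eq hn, Jconj, eps_pv hn, eps_qv hn]

lemma Ei_mul_Ei {i j : ℕ} (hi : i < n - 1) (hj : j < n - 1) :
    Ei n i * Ei n j = if i = j then Ehat n else 0 := by
  have hn : 1 ≤ n := by omega
  rw [Ei_eq hi, Ei_eq hj, add_mul, mul_add, mul_add, mulVV, mulVV, mulVV, mulVV,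
    sum_pe hj, sum_pq hn, sum_ev_ev n i j (by omega), sum_eq' hi, Ehat_eq hn]
  by_cases h : i = j <;> simp [h]

lemma Ei_mul_Ehat {i : ℕ} (hi : i < n - 1) : Ei n i * Ehat n = 0 := by
  have hn : 1 ≤ n := by omega
  rw [Ei_eq hi, Ehat_eq hn, add_mul, mulVV, mulVV, sum_pq hn, sum_eq' hi]
  simp

lemma Ehat_mul_Ei {i : ℕ} (hi : i < n - 1) : Ehat n * Ei n i = 0 := by
  have hn : 1 ≤ n := by omega
  rw [Ei_eq hi, Ehat_eq hn, mul_add, mulVV, mulVV, sum_pq hn, sum_pe hi]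
  simp

lemma Ehat_mul_Ehat (hn : 1 ≤ n) : Ehat n * Ehat n = 0 := by
  rw [Ehat_eq hn, mulVV, sum_pq hn]
  simp

/-- the unified family of generators -/
noncomputable def gFam (n : ℕ) (k : Fin n) : Matrix (Fin (n + 1)) (Fin (n + 1)) ℝ :=
  if (k : ℕ) < n - 1 then Ei n (k : ℕ) else Ehat n

lemma gFam_val {k : Fin n} (hk : ¬ (k : ℕ) < n - 1) : (k : ℕ) = n - 1 := by
  have := k.isLt; omega

lemma range_union_eq (hn : 1 ≤ n) :
    (Set.range fun i : Fin (n - 1) => Ei n i) ∪ {Ehat n} = Set.range (gFam n) := by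
  ext X
  constructor
  · rintro (⟨i, rfl⟩ | rfl)
    · exact ⟨⟨(i : ℕ), by omega⟩, by simp [gFam, i.isLt]⟩
    · refine ⟨⟨n - 1, by omega⟩, ?_⟩
      simp [gFam]
  · rintro ⟨k, rfl⟩
    by_cases hk : (k : ℕ) < n - 1
    · exact Or.inl ⟨⟨(k : ℕ), hk⟩, by simp [gFam, hk]⟩
    · right
      simp [gFam, hk]

lemma gFam_mem_uminus (hn : 1 ≤ n) (k : Fin n) : gFam n k ∈ uminusSet n := by
  unfold gFam
  split_ifs with h
  · exact Ei_mem_uminus h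
  · exact Ehat_mem_uminus hn

lemma gFam_comm (hn : 1 ≤ n) (k l : Fin n) : gFam n k * gFam n l = gFam n l * gFam n k := by
  unfold gFam
  split_ifs with h1 h2 h2
  · rw [Ei_mul_Ei h1 h2, Ei_mul_Ei h2 h1]
    by_cases h : (k : ℕ) = (l : ℕ) <;> simp [h, Ne.symm, eq_comm]
  · rw [Ei_mul_Ehat h1, Ehat_mul_Ei h1]
  · rw [Ei_mul_Ehat h2, Ehat_mul_Ei h2]
  · rfl

/-- uminusSet as a submodule -/
def Usub (n : ℕ) : Submodule ℝ (Matrix (Fin (n + 1)) (Fin (n + 1)) ℝ) where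
  carrier := uminusSet n
  add_mem' := by
    rintro a b ⟨ha1, ha2⟩ ⟨hb1, hb2⟩
    refine ⟨by rw [Matrix.trace_add, ha1, hb1, add_zero], ?_⟩
    rw [Matrix.transpose_add, Matrix.mul_add, Matrix.add_mul, ha2, hb2]
  zero_mem' := by
    refine ⟨by simp, ?_⟩
    simp
  smul_mem' := by
    rintro c a ⟨ha1, ha2⟩
    refine ⟨by rw [Matrix.trace_smul, ha1, smul_zero], ?_⟩
    rw [Matrix.transpose_smul, mul_smul_comm, smul_mul_assoc, ha2]

lemma gFam_entry (n : ℕ) (hn : 1 ≤ n) (j : Fin n) (k : ℕ) (hk : k < n) :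
    gFam n j ⟨k, by omega⟩ (Fin.last n) = if (j : ℕ) = k then 1 else 0 := by
  have hj := j.isLt
  have hb : ((Fin.last n : Fin (n + 1)) : ℕ) = n := Fin.val_last n
  have ha : ((⟨k, by omega⟩ : Fin (n + 1)) : ℕ) = k := rfl
  unfold gFam Ei Ehat
  split_ifs with h <;>
    simp only [Matrix.of_apply] <;>
    split_ifs <;> first | (exfalso; omega) | norm_num

lemma gFam_li (n : ℕ) (hn : 1 ≤ n) : LinearIndependent ℝ (gFam n) := by
  rw [Fintype.linearIndependent_iff]
  intro c hc j
  have hj := j.isLt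
  have h2 := congrArg (fun M => M ⟨(j : ℕ), by omega⟩ (Fin.last n)) hc
  simp only [Matrix.sum_apply, Matrix.smul_apply, smul_eq_mul, Matrix.zero_apply] at h2
  rw [Finset.sum_eq_single j] at h2
  · rwa [gFam_entry n hn j j j.isLt, if_pos rfl, mul_one] at h2
  · intro b _ hb
    rw [gFam_entry n hn b j j.isLt, if_neg (fun h => hb (Fin.ext h)), mul_zero]
  · simp

/-- the image generators -/
noncomputable def Fk (n : ℕ) (k : Fin n) : Matrix (Fin (n + 1)) (Fin (n + 1)) ℝ :=
  Matrix.of fun a b =>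
    if (a : ℕ) = (k : ℕ) ∧ (b : ℕ) = n then 1
    else if (b : ℕ) = (k : ℕ) ∧ (a : ℕ) = n then -1
    else 0

lemma piProj_gFam (n : ℕ) (hn : 1 ≤ n) (k : Fin n) : piProj n (gFam n k) = Fk n k := by
  have hk := k.isLt
  ext a b
  have hdef : piProj n (gFam n k) a b
      = if ((a : ℕ) < n ∧ (b : ℕ) = n) ∨ ((a : ℕ) = n ∧ (b : ℕ) < n)
        then gFam n k a b else 0 := rfl
  rw [hdef]
  unfold gFam Ei Ehat Fk
  simp only [Matrix.of_apply]
  split_ifs <;> intros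
  any_goals (exfalso; omega)
  any_goals norm_num
  any_goals (intros; exfalso; omega)
  all_goals (split_ifs <;> intros <;> first | (exfalso; omega) | norm_num)

lemma Fk_mem_pprime (n : ℕ) (hn : 1 ≤ n) (k : Fin n) : Fk n k ∈ pprimeSet n := by
  have hk := k.isLt
  refine ⟨⟨?_, ?_⟩, ?_, ?_⟩
  · unfold Matrix.trace
    apply Finset.sum_eq_zero
    intro a _
    simp only [Matrix.diag_apply, Fk, Matrix.of_apply]
    split_ifs <;> first | (exfalso; omega) | norm_num
  · ext a b
    simp only [Jmat, Matrix.diagonal_mul, Matrix.mul_diagonal, Matrix.transpose_apply, Fk,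
      Matrix.of_apply]
    split_ifs <;> first | (exfalso; omega) | norm_num
  · intro i j hi hj
    simp only [Fk, Matrix.of_apply]
    split_ifs <;> first | (exfalso; omega) | norm_num
  · simp only [Fk, Matrix.of_apply, Fin.val_last]
    split_ifs <;> first | (exfalso; omega) | norm_num

/-- pprimeSet as a submodule -/
def Psub (n : ℕ) : Submodule ℝ (Matrix (Fin (n + 1)) (Fin (n + 1)) ℝ) where
  carrier := pprimeSet n
  add_mem' := by
    rintro a b ⟨ha1, ha2, ha3⟩ ⟨hb1, hb2, hb3⟩
    refine ⟨(Usub n).add_mem ha1 hb1, fun i j hi hj => ?_, ?_⟩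
    · simp [Matrix.add_apply, ha2 i j hi hj, hb2 i j hi hj]
    · simp [Matrix.add_apply, ha3, hb3]
  zero_mem' := ⟨(Usub n).zero_mem, by simp, by simp⟩
  smul_mem' := by
    rintro c a ⟨ha1, ha2, ha3⟩
    refine ⟨(Usub n).smul_mem c ha1, fun i j hi hj => ?_, ?_⟩
    · simp [Matrix.smul_apply, ha2 i j hi hj]
    · simp [Matrix.smul_apply, ha3]

lemma J_entry {n : ℕ} {X : Matrix (Fin (n + 1)) (Fin (n + 1)) ℝ}
    (hJ : Jmat n * Xᵀ * Jmat n = X) (a b : Fin (n + 1)) :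
    X a b = (if (a : ℕ) < n then (1 : ℝ) else -1) * X b a
      * (if (b : ℕ) < n then (1 : ℝ) else -1) := by
  conv_lhs => rw [← hJ]
  simp only [Jmat, Matrix.diagonal_mul, Matrix.mul_diagonal, Matrix.transpose_apply]

lemma pprime_repr (n : ℕ) (hn : 1 ≤ n) {X : Matrix (Fin (n + 1)) (Fin (n + 1)) ℝ}
    (hX : X ∈ pprimeSet n) :
    X = ∑ k : Fin n, X ⟨(k : ℕ), by omega⟩ (Fin.last n) • Fk n k := by
  obtain ⟨⟨htr, hJ⟩, hblk, hcor⟩ := hX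
  ext a b
  rw [Matrix.sum_apply]
  simp only [Matrix.smul_apply, smul_eq_mul]
  by_cases hb : (b : ℕ) = n
  · have hbl : b = Fin.last n := Fin.ext (by simpa using hb)
    by_cases ha : (a : ℕ) = n
    · have hal : a = Fin.last n := Fin.ext (by simpa using ha)
      rw [hal, hbl, hcor]
      symm
      apply Finset.sum_eq_zero
      intro k _
      have hk := k.isLt
      simp only [Fk, Matrix.of_apply, Fin.val_last]
      split_ifs <;> first | (exfalso; omega) | norm_num
    · have ha' : (a : ℕ) < n := by have := a.isLt; omega
      rw [Finset.sum_eq_single (⟨(a : ℕ), ha'⟩ : Fin n)]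
      · have hone : Fk n ⟨(a : ℕ), ha'⟩ a b = 1 := by
          simp [Fk, hb]
        rw [hone, mul_one, hbl]
      · intro c _ hc
        have hc' : (c : ℕ) ≠ (a : ℕ) := fun h => hc (Fin.ext h)
        have hzero : Fk n c a b = 0 := by
          simp [Fk, hb, ha, Ne.symm hc']
        rw [hzero, mul_zero]
      · simp
  · by_cases ha : (a : ℕ) = n
    · have hb' : (b : ℕ) < n := by have := b.isLt; omega
      have hXab : X a b = -X b a := by
        rw [J_entry hJ a b, if_neg (by omega), if_pos hb']
        ring
      rw [Finset.sum_eq_single (⟨(b : ℕ), hb'⟩ : Fin n)]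
      · have hval : Fk n ⟨(b : ℕ), hb'⟩ a b = -1 := by
          simp [Fk, ha, hb]
        have ha2 : a = Fin.last n := Fin.ext (by simpa using ha)
        rw [hval, hXab, mul_neg_one, ha2]
      · intro c _ hc
        have hc' : (c : ℕ) ≠ (b : ℕ) := fun h => hc (Fin.ext h)
        have hzero : Fk n c a b = 0 := by
          simp [Fk, hb, Ne.symm hc']
        rw [hzero, mul_zero]
      · simp
    · have ha' : (a : ℕ) < n := by have := a.isLt; omega
      have hb' : (b : ℕ) < n := by have := b.isLt; omega
      rw [hblk a b ha' hb']
      symm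
      apply Finset.sum_eq_zero
      intro k _
      have hzero : Fk n k a b = 0 := by
        simp only [Fk, Matrix.of_apply]
        split_ifs <;> first | (exfalso; omega) | norm_num
      rw [hzero, mul_zero]

lemma span_Fk_eq (n : ℕ) (hn : 1 ≤ n) :
    (Submodule.span ℝ (Set.range (Fk n)) : Set (Matrix (Fin (n + 1)) (Fin (n + 1)) ℝ))
      = pprimeSet n := by
  apply Set.Subset.antisymm
  · intro X hX
    exact Submodule.span_le (p := Psub n)
      |>.mpr (by rintro Y ⟨k, rfl⟩; exact Fk_mem_pprime n hn k) hX
  · intro X hX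
    rw [pprime_repr n hn hX]
    exact Submodule.sum_mem _ fun k _ =>
      Submodule.smul_mem _ _ (Submodule.subset_span ⟨k, rfl⟩)

end AbelAux

open AbelAux in
theorem abelian_subalgebra_sl_projects_onto (n : ℕ) (hn : 1 ≤ n) :
    (↑(Submodule.span ℝ ((Set.range fun i : Fin (n - 1) => Ei n i) ∪ {Ehat n})) ⊆
        uminusSet n) ∧
    Module.finrank ℝ
      (Submodule.span ℝ ((Set.range fun i : Fin (n - 1) => Ei n i) ∪ {Ehat n})) = n ∧
    (∀ X ∈ Submodule.span ℝ ((Set.range fun i : Fin (n - 1) => Ei n i) ∪ {Ehat n}),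
      ∀ Y ∈ Submodule.span ℝ ((Set.range fun i : Fin (n - 1) => Ei n i) ∪ {Ehat n}),
        X * Y = Y * X) ∧
    (↑(Submodule.map (piProj n)
        (Submodule.span ℝ ((Set.range fun i : Fin (n - 1) => Ei n i) ∪ {Ehat n}))) =
      pprimeSet n) := by
  rw [range_union_eq hn]
  refine ⟨?_, ?_, ?_, ?_⟩
  · exact fun x hx => Submodule.span_le (p := Usub n)
      |>.mpr (by rintro y ⟨k, rfl⟩; exact gFam_mem_uminus hn k) hx
  · simpa using finrank_span_eq_card (gFam_li n hn)
  · intro X hX Y hY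
    exact Submodule.span_induction₂ (p := fun x y _ _ => x * y = y * x)
      (fun x y hx hy => by
        obtain ⟨k, rfl⟩ := hx
        obtain ⟨l, rfl⟩ := hy
        exact gFam_comm hn k l)
      (by simp) (by simp)
      (fun x y z _ _ _ h1 h2 => by
        show (x + y) * z = z * (x + y)
        rw [add_mul, mul_add, h1, h2])
      (fun x y z _ _ _ h1 h2 => by
        show x * (y + z) = (y + z) * x
        rw [mul_add, add_mul, h1, h2])
      (fun r x y _ _ h => by
        show (r • x) * y = y * (r • x)
        rw [smul_mul_assoc, mul_smul_comm, h])
      (fun r x y _ _ h => by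
        show x * (r • y) = (r • y) * x
        rw [mul_smul_comm, smul_mul_assoc, h])
      hX hY
  · have himg : ⇑(piProj n) '' Set.range (gFam n) = Set.range (Fk n) := by
      rw [← Set.range_comp]
      exact congrArg Set.range (funext fun k => piProj_gFam n hn k)
    rw [Submodule.map_span, himg]
    exact span_Fk_eq n hn
end
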